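/- arXiv:0705.0518 — 2 statements merged into one kernel-verified Lean document; each statement's English description precedes it below -/
import Mathlib

section
/- The matrices A, A*, A^ε are cyclically conjugated by P: A*P = PA, A^εP = PA*, and AP = PA^ε (equivalently, since P is invertible, A* = PAP⁻¹, A^ε = PA*P⁻¹, and A = PA^εP⁻¹). -/
noncomputable section

open Matrix Finset

/-- Vertex set of the hypercube `Q_D`: binary strings of length `D`. -/
abbrev Vtx (D : ℕ) := Fin D → Bool

/-- Hamming weight of a vertex, i.e. its distance to the fixed vertex `x = (0,...,0)`. -/
def wt {D : ℕ} (y : Vtx D) : ℕ := (Finset.univ.filter fun k => y k = true).card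

/-- The adjacency matrix of the hypercube `Q_D`: `A_{yz} = 1` iff `y,z` differ in exactly
one coordinate. -/
def adjMat (D : ℕ) : Matrix (Vtx D) (Vtx D) ℂ :=
  fun y z => if (Finset.univ.filter fun k => y k ≠ z k).card = 1 then 1 else 0

/-- The dual adjacency matrix of `Q_D` with respect to `x = (0,...,0)`: the diagonal
matrix with `(y,y)`-entry `D - 2·wt(y)`. -/
def dualAdjMat (D : ℕ) : Matrix (Vtx D) (Vtx D) ℂ :=
  Matrix.diagonal fun y => (D : ℂ) - 2 * (wt y : ℂ)

/-- The imaginary adjacency matrix `Aᵉ = -i(AA* - A*A)/2`. -/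
def imagAdjMat (D : ℕ) : Matrix (Vtx D) (Vtx D) ℂ :=
  (-Complex.I / 2) • (adjMat D * dualAdjMat D - dualAdjMat D * adjMat D)

/-- The 2×2 matrix `P₁` with entries `(P₁)₀₀ = 1`, `(P₁)₀₁ = 1`, `(P₁)₁₀ = -i`,
`(P₁)₁₁ = i`. -/
def P1 : Bool → Bool → ℂ
  | false, false => 1
  | false, true  => 1
  | true,  false => -Complex.I
  | true,  true  => Complex.I

/-- The D-fold Kronecker power `P = P₁^{⊗D}`, i.e. `P_{yz} = ∏_k (P₁)_{y_k z_k}`. -/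
def Pmat (D : ℕ) : Matrix (Vtx D) (Vtx D) ℂ :=
  fun y z => ∏ k : Fin D, P1 (y k) (z k)

/-- The eigenvalues `θ_j = D - 2j`. -/
def theta (D j : ℕ) : ℂ := (D : ℂ) - 2 * (j : ℂ)

/-- The `i`-th primitive idempotent `E_i = ∏_{0 ≤ j ≤ D, j ≠ i} (A - θ_j I)/(θ_i - θ_j)`. -/
def Emat (D i : ℕ) : Matrix (Vtx D) (Vtx D) ℂ :=
  Polynomial.aeval (adjMat D)
    (∏ j ∈ (Finset.range (D + 1)).erase i,
      Polynomial.C ((theta D i - theta D j)⁻¹) * (Polynomial.X - Polynomial.C (theta D j)))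

/-- The `i`-th dual idempotent `E*_i`: diagonal with `(y,y)`-entry `1` if `wt(y) = i`. -/
def EstarMat (D i : ℕ) : Matrix (Vtx D) (Vtx D) ℂ :=
  Matrix.diagonal fun y => if wt y = i then 1 else 0

/-- The `i`-th imaginary idempotent `Eᵉ_i = P⁻¹ E_i P`. -/
def EepsMat (D i : ℕ) : Matrix (Vtx D) (Vtx D) ℂ :=
  (Pmat D)⁻¹ * Emat D i * Pmat D

/-- `W` is a `T`-module: a subspace of `ℂ^X` invariant under `A` and `A*`. -/
def IsTMod (D : ℕ) (W : Submodule ℂ (Vtx D → ℂ)) : Prop :=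
  (∀ w ∈ W, (adjMat D).mulVec w ∈ W) ∧ (∀ w ∈ W, (dualAdjMat D).mulVec w ∈ W)

/-- `W` is an irreducible `T`-module. -/
def IsIrredTMod (D : ℕ) (W : Submodule ℂ (Vtx D → ℂ)) : Prop :=
  IsTMod D W ∧ W ≠ ⊥ ∧
    ∀ U : Submodule ℂ (Vtx D → ℂ), IsTMod D U → U ≤ W → U = ⊥ ∨ U = W

/-- The Hermitian inner product `⟨u,v⟩ = uᵗ · conj v` (linear in the first argument). -/
def inp {D : ℕ} (u v : Vtx D → ℂ) : ℂ := ∑ y, u y * (starRingEnd ℂ) (v y)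

/-!
On each coordinate `P₁` conjugates the Pauli matrices `σₓ ↦ σ_z ↦ σ_y ↦ σₓ`. Correspondingly
`A = ∑ₖ Xₖ`, `A* = ∑ₖ Zₖ` and `Aᵉ = ∑ₖ i ZₖXₖ`, where `Xₖ` flips the `k`-th coordinate and `Zₖ`
is the diagonal sign matrix `(-1)^{yₖ}`; the cyclic conjugation then holds term by term, and on
each term it follows from the Pauli relations `Zₖ² = 1`, `XₖZₖ = -ZₖXₖ`, `ZₖP = PXₖ` and
`XₖP = -i ZₖPZₖ`.
-/

open Complex

theorem Finset.prod_update_eq_mul {ι α M : Type*} [Fintype ι] [DecidableEq ι] [CommMonoid M]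
    (f : ι → α → M) (y : ι → α) (k : ι) (v : α) {c : M} (h : f k v = c * f k (y k)) :
    ∏ j, f j (Function.update y k v j) = c * ∏ j, f j (y j) := by
  rw [← mul_prod_erase _ _ (mem_univ k), ← mul_prod_erase _ _ (mem_univ k),
    Function.update_self, h, mul_assoc]
  congr 2
  exact prod_congr rfl fun j hj => by rw [Function.update_of_ne (ne_of_mem_erase hj)]

theorem Matrix.permMatrix_mul_diagonal {n R : Type*} [Fintype n] [DecidableEq n]
    [NonAssocSemiring R] (σ : Equiv.Perm n) (d : n → R) :
    σ.permMatrix R * diagonal d = diagonal (d ∘ σ) * σ.permMatrix R := by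
  rw [PEquiv.toMatrix_toPEquiv_mul, PEquiv.mul_toMatrix_toPEquiv]
  refine Matrix.ext fun y z => ?_
  simp only [submatrix_apply, diagonal_apply, id, Function.comp_apply, Equiv.eq_symm_apply]

theorem pauli_conjugation_cycle {A : Type*} [Ring A] [Algebra ℂ A] {X Z P : A} (hZZ : Z * Z = 1)
    (hXZ : X * Z = -(Z * X)) (hZP : Z * P = P * X) (hXP : X * P = -I • (Z * P * Z)) :
    (I • (Z * X)) * P = P * Z ∧ X * P = P * (I • (Z * X)) := by
  constructor
  · rw [smul_mul_assoc, mul_assoc, hXP, mul_smul_comm, smul_smul, ← mul_assoc, ← mul_assoc, hZZ]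
    simp
  · rw [mul_smul_comm, ← neg_neg (Z * X), ← hXZ, mul_neg, ← mul_assoc, ← hZP, hXP, smul_neg,
      neg_smul]

namespace Hypercube

variable {D : ℕ}

def boolSign (b : Bool) : ℂ := if b then -1 else 1

@[simp]
theorem boolSign_not (b : Bool) : boolSign (!b) = -boolSign b := by
  cases b <;> simp [boolSign]

theorem boolSign_mul_self (b : Bool) : boolSign b * boolSign b = 1 := by
  cases b <;> simp [boolSign]

theorem P1_not_left (a b : Bool) : P1 (!a) b = -I * boolSign a * boolSign b * P1 a b := by
  cases a <;> cases b <;> simp [P1, boolSign]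

theorem P1_not_right (a b : Bool) : P1 a (!b) = boolSign a * P1 a b := by
  cases a <;> cases b <;> simp [P1, boolSign]

def flipAt (k : Fin D) : Equiv.Perm (Vtx D) :=
  Function.Involutive.toPerm (fun y => Function.update y k (!y k)) fun y => by simp

theorem flipAt_apply (k : Fin D) (y : Vtx D) : flipAt k y = Function.update y k (!y k) := rfl

theorem flipAt_symm (k : Fin D) : (flipAt k).symm = flipAt k :=
  Function.Involutive.toPerm_symm _

theorem flipAt_eq_iff {k : Fin D} {y z : Vtx D} :
    flipAt k y = z ↔ (univ.filter fun j => y j ≠ z j) = {k} := by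
  simp only [flipAt_apply, funext_iff, Finset.ext_iff, mem_filter, mem_univ, true_and,
    mem_singleton]
  refine forall_congr' fun j => ?_
  by_cases h : j = k
  · subst h; cases y j <;> cases z j <;> simp
  · simp [h]

theorem sum_boolSign_flipAt (k : Fin D) (y : Vtx D) :
    ∑ j, boolSign (flipAt k y j) = ∑ j, boolSign (y j) - 2 * boolSign (y k) := by
  rw [flipAt_apply]
  simp only [Function.apply_update (fun _ => boolSign)]
  rw [sum_update_of_mem (mem_univ k), ← add_sum_erase _ _ (mem_univ k), sdiff_singleton_eq_erase,
    boolSign_not]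
  ring

theorem Pmat_flipAt_left (k : Fin D) (y z : Vtx D) :
    Pmat D (flipAt k y) z = -I * boolSign (y k) * boolSign (z k) * Pmat D y z :=
  prod_update_eq_mul (fun j a => P1 a (z j)) y k _ (P1_not_left _ _)

theorem Pmat_flipAt_right (k : Fin D) (y z : Vtx D) :
    Pmat D y (flipAt k z) = boolSign (y k) * Pmat D y z :=
  prod_update_eq_mul (fun j a => P1 (y j) a) z k _ (P1_not_right _ _)


theorem sum_boolSign (y : Vtx D) : ∑ k, boolSign (y k) = (D : ℂ) - 2 * (wt y : ℂ) := by
  have h : ∀ b, boolSign b = 1 - 2 * if b = true then (1 : ℂ) else 0 := by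
    intro b; cases b <;> norm_num [boolSign]
  simp only [h, sum_sub_distrib, ← mul_sum, sum_boole, sum_const, card_univ, Fintype.card_fin,
    nsmul_eq_mul, mul_one, wt]

def flipMat (k : Fin D) : Matrix (Vtx D) (Vtx D) ℂ := (flipAt k).permMatrix ℂ

def signMat (k : Fin D) : Matrix (Vtx D) (Vtx D) ℂ := diagonal fun y => boolSign (y k)

theorem adjMat_eq_sum_flipMat : adjMat D = ∑ k, flipMat k := by
  refine Matrix.ext fun y z => ?_
  simp only [adjMat, Matrix.sum_apply, flipMat, PEquiv.toMatrix_toPEquiv_apply, Pi.single_apply,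
    eq_comm (a := z), flipAt_eq_iff]
  rw [sum_ite_zero _ _ (fun i _ j _ hi hj => singleton_inj.mp (hi.symm.trans hj))]
  simp [card_eq_one]

theorem dualAdjMat_eq_sum_signMat : dualAdjMat D = ∑ k, signMat k := by
  refine Matrix.ext fun y z => ?_
  simp only [dualAdjMat, signMat, Matrix.sum_apply, diagonal_apply, ← sum_boolSign]
  split_ifs <;> simp

theorem signMat_mul_self (k : Fin D) : signMat k * signMat k = 1 := by
  simp [signMat, boolSign_mul_self]

theorem flipMat_mul_signMat_self (k : Fin D) : flipMat k * signMat k = -(signMat k * flipMat k) := by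
  rw [flipMat, signMat, permMatrix_mul_diagonal, ← neg_mul, diagonal_neg]
  congr 2 with y
  simp [flipAt_apply]

theorem flipMat_mul_dualAdjMat_sub (k : Fin D) :
    flipMat k * dualAdjMat D - dualAdjMat D * flipMat k = (-2 : ℂ) • (signMat k * flipMat k) := by
  have hdual : dualAdjMat D = diagonal fun y => ∑ j, boolSign (y j) := by
    simp [dualAdjMat, sum_boolSign]
  rw [hdual, flipMat, permMatrix_mul_diagonal, ← sub_mul, diagonal_sub, signMat,
    ← smul_mul_assoc, ← diagonal_smul]
  congr 2 with y
  simp [sum_boolSign_flipAt]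

theorem imagAdjMat_eq_sum_signMat_mul_flipMat :
    imagAdjMat D = ∑ k, I • (signMat k * flipMat k) := by
  rw [imagAdjMat, adjMat_eq_sum_flipMat, sum_mul, mul_sum, ← sum_sub_distrib, smul_sum]
  refine sum_congr rfl fun k _ => ?_
  rw [flipMat_mul_dualAdjMat_sub, smul_smul]
  congr 1
  field_simp

theorem signMat_mul_Pmat (k : Fin D) : signMat k * Pmat D = Pmat D * flipMat k := by
  refine Matrix.ext fun y z => ?_
  rw [flipMat, PEquiv.mul_toMatrix_toPEquiv, flipAt_symm]
  simp [signMat, Pmat_flipAt_right]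

theorem flipMat_mul_Pmat (k : Fin D) :
    flipMat k * Pmat D = -I • (signMat k * Pmat D * signMat k) := by
  refine Matrix.ext fun y z => ?_
  rw [flipMat, PEquiv.toMatrix_toPEquiv_mul]
  simp only [submatrix_apply, id_eq, Pmat_flipAt_left, signMat, Matrix.smul_apply, mul_diagonal,
    diagonal_mul, smul_eq_mul]
  ring

end Hypercube

open Hypercube in
theorem cyclic_conjugation_by_P_general (D : ℕ) :
    dualAdjMat D * Pmat D = Pmat D * adjMat D ∧
    imagAdjMat D * Pmat D = Pmat D * dualAdjMat D ∧
    adjMat D * Pmat D = Pmat D * imagAdjMat D := by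
  have hcycle := fun k : Fin D => pauli_conjugation_cycle (signMat_mul_self k)
    (flipMat_mul_signMat_self k) (signMat_mul_Pmat k) (flipMat_mul_Pmat k)
  rw [imagAdjMat_eq_sum_signMat_mul_flipMat, adjMat_eq_sum_flipMat, dualAdjMat_eq_sum_signMat]
  simp only [sum_mul, mul_sum]
  exact ⟨sum_congr rfl fun k _ => signMat_mul_Pmat k, sum_congr rfl fun k _ => (hcycle k).1,
    sum_congr rfl fun k _ => (hcycle k).2⟩

/-- `A`, `A*`, `Aᵉ` are cyclically conjugated by `P`:
`A*P = PA`, `AᵉP = PA*`, `AP = PAᵉ`. -/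
theorem cyclic_conjugation_by_P (D : ℕ) (hD : 0 < D) :
    dualAdjMat D * Pmat D = Pmat D * adjMat D ∧
    imagAdjMat D * Pmat D = Pmat D * dualAdjMat D ∧
    adjMat D * Pmat D = Pmat D * imagAdjMat D :=
  cyclic_conjugation_by_P_general D
end
end

section
/- For 0 ≤ i ≤ D the idempotents are cyclically conjugated by P: E*_i P = P E_i, E^ε_i P = P E*_i, and E_i P = P E^ε_i (equivalently E*_i = P E_i P⁻¹, E^ε_i = P E*_i P⁻¹, and E_i = P E^ε_i P⁻¹). -/
noncomputable section

open Matrix Finset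

/-!
Flipping the `k`-th coordinate of `z` multiplies `P_{yz}` by `(-1)^{y_k}`, so summing over the
`D` neighbours of `z` gives `(P A)_{yz} = (D - 2 wt y) P_{yz} = (A* P)_{yz}`. Since `A*` has
eigenvalue `θ_{wt y}` at `y`, the Lagrange polynomial that gives `E_i = p_i(A)` also gives
`E*_i = p_i(A*)`, whence `E*_i P = P E_i`. The last identity is the definition of `Eᵉ_i`, and
the middle one holds because `P³ = (2 - 2i)^D I` is scalar: `P⁻¹ E_i P = P² E_i P⁻² = P E*_i P⁻¹`.
-/

section KroneckerPower

variable {n R : Type*} [CommSemiring R]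

def kronPow (D : ℕ) (M : Matrix n n R) : Matrix (Fin D → n) (Fin D → n) R :=
  of fun y z => ∏ k, M (y k) (z k)

theorem kronPow_mul [Fintype n] (D : ℕ) (M N : Matrix n n R) :
    kronPow D M * kronPow D N = kronPow D (M * N) := by
  ext y z
  simp only [kronPow, of_apply, mul_apply, ← prod_mul_distrib, Fintype.prod_sum]

theorem kronPow_one [DecidableEq n] (D : ℕ) : kronPow D (1 : Matrix n n R) = 1 := by
  ext y z
  simp only [kronPow, of_apply, one_apply, prod_boole, mem_univ, true_imp_iff,
    funext_iff]

theorem kronPow_pow [Fintype n] [DecidableEq n] (D m : ℕ) (M : Matrix n n R) :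
    kronPow D (M ^ m) = kronPow D M ^ m := by
  induction m with
  | zero => rw [pow_zero, pow_zero, kronPow_one]
  | succ m ih => rw [pow_succ, pow_succ, ← kronPow_mul, ih]

theorem kronPow_smul (D : ℕ) (c : R) (M : Matrix n n R) :
    kronPow D (c • M) = c ^ D • kronPow D M := by
  ext y z
  simp [kronPow, prod_mul_distrib]

end KroneckerPower

theorem SemiconjBy.aeval {R A : Type*} [CommSemiring R] [Semiring A] [Algebra R A] {a x y : A}
    (h : SemiconjBy a x y) (p : Polynomial R) :
    SemiconjBy a (Polynomial.aeval x p) (Polynomial.aeval y p) := by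
  induction p using Polynomial.induction_on' with
  | add p q hp hq => simpa only [map_add] using hp.add_right hq
  | monomial m r =>
    simpa only [Polynomial.aeval_monomial] using
      SemiconjBy.mul_right (Algebra.commute_algebraMap_right r a) (h.pow_right m)

theorem Polynomial.aeval_diagonal {n R : Type*} [Fintype n] [DecidableEq n] [CommSemiring R]
    (d : n → R) (p : Polynomial R) :
    Polynomial.aeval (diagonal d) p = diagonal fun y => p.eval (d y) := by
  rw [show diagonal d = diagonalAlgHom R d from rfl, Polynomial.aeval_algHom_apply,
    diagonalAlgHom_apply]
  congr 1
  ext y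
  rw [← Polynomial.coe_aeval_eq_eval]
  exact (Polynomial.aeval_algHom_apply (Pi.evalAlgHom R (fun _ => R) y) d p).symm

theorem Matrix.inv_mul_mul_mul_self_eq_of_commute_pow_three {n R : Type*} [Fintype n]
    [DecidableEq n] [CommRing R] {P X Y : Matrix n n R} (hP : IsUnit P.det)
    (hY : Commute (P ^ 3) Y) (h : X * P = P * Y) : P⁻¹ * Y * P * P = P * X := by
  have hPu : IsUnit P := (isUnit_iff_isUnit_det P).mpr hP
  have hsq : Y * P * P = P * P * X := by
    refine hPu.mul_left_inj.mp ?_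
    calc Y * P * P * P = Y * P ^ 3 := by rw [pow_three, mul_assoc, mul_assoc]
      _ = P * P * (P * Y) := by rw [← hY.eq, pow_three]; noncomm_ring
      _ = P * P * X * P := by rw [← h]; simp only [mul_assoc]
  refine hPu.mul_right_inj.mp ?_
  rw [mul_assoc, mul_assoc, mul_nonsing_inv_cancel_left _ _ hP, ← mul_assoc, hsq, mul_assoc]

theorem P1_pow_three : of P1 ^ 3 = (2 - 2 * Complex.I) • 1 := by
  ext a b
  fin_cases a <;> fin_cases b <;>
    norm_num [pow_three, mul_apply, P1, one_apply, Complex.ext_iff]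

theorem Pmat_eq_kronPow (D : ℕ) : Pmat D = kronPow D (of P1) := rfl

theorem Pmat_pow_three (D : ℕ) : Pmat D ^ 3 = (2 - 2 * Complex.I) ^ D • 1 := by
  rw [Pmat_eq_kronPow, ← kronPow_pow, P1_pow_three, kronPow_smul, kronPow_one]

theorem isUnit_det_Pmat (D : ℕ) : IsUnit (Pmat D).det := by
  have hc : (2 - 2 * Complex.I) ^ D ≠ 0 := pow_ne_zero _ fun h => by
    simpa using congrArg Complex.re h
  refine isUnit_det_of_right_inverse (B := ((2 - 2 * Complex.I) ^ D)⁻¹ • Pmat D ^ 2) ?_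
  rw [mul_smul_comm, ← pow_succ', Pmat_pow_three, smul_smul, inv_mul_cancel₀ hc, one_smul]

def flipCoord {D : ℕ} (z : Vtx D) (k : Fin D) : Vtx D := Function.update z k (!z k)

theorem flipCoord_injective {D : ℕ} (z : Vtx D) : Function.Injective (flipCoord z) := by
  intro k l hkl
  by_contra hne
  simpa [flipCoord, Function.update_of_ne hne] using congrFun hkl k

theorem card_filter_ne_eq_one_iff {D : ℕ} (w z : Vtx D) :
    (univ.filter fun k => w k ≠ z k).card = 1 ↔ ∃ k, flipCoord z k = w := by
  rw [card_eq_one]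
  refine exists_congr fun k => ⟨fun hk => funext fun j => ?_, fun hk => ?_⟩
  · have hj := Finset.ext_iff.mp hk j
    simp only [mem_filter, mem_univ, true_and, mem_singleton] at hj
    by_cases hjk : j = k
    · subst hjk
      have hne := hj.mpr rfl
      cases hw : w j <;> cases hz : z j <;> simp_all [flipCoord]
    · simp_all [flipCoord]
  · ext j
    by_cases hjk : j = k <;> simp [← hk, flipCoord, hjk]

theorem sum_mul_adjMat {D : ℕ} (f : Vtx D → ℂ) (z : Vtx D) :
    ∑ w, f w * adjMat D w z = ∑ k, f (flipCoord z k) := by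
  have hnbr : (univ.filter fun w : Vtx D => (univ.filter fun k => w k ≠ z k).card = 1)
      = univ.image (flipCoord z) := by
    ext w
    simp only [mem_filter, mem_univ, true_and, mem_image, card_filter_ne_eq_one_iff]
  calc ∑ w, f w * adjMat D w z
      = ∑ w ∈ univ.filter fun w : Vtx D => (univ.filter fun k => w k ≠ z k).card = 1, f w := by
        simp only [adjMat, mul_ite, mul_one, mul_zero, sum_ite, sum_const_zero, add_zero]
    _ = ∑ k, f (flipCoord z k) := by rw [hnbr, sum_image (flipCoord_injective z).injOn]

theorem Pmat_flipCoord {D : ℕ} (y z : Vtx D) (k : Fin D) :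
    Pmat D y (flipCoord z k) = (if y k then -1 else 1) * Pmat D y z := by
  have hP1 : ∀ a b, P1 a (!b) = (if a then -1 else 1) * P1 a b := by
    intro a b; cases a <;> cases b <;> simp [P1]
  have hfactor : ∀ j, P1 (y j) (flipCoord z k j)
      = (if j = k then (if y k then -1 else 1) else 1) * P1 (y j) (z j) := by
    intro j
    by_cases hjk : j = k
    · subst hjk; simp [flipCoord, hP1]
    · simp [flipCoord, hjk]
  simp only [Pmat, hfactor, prod_mul_distrib, prod_ite_eq', mem_univ, if_true]

theorem sum_sign_eq {D : ℕ} (y : Vtx D) :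
    ∑ k, (if y k then (-1 : ℂ) else 1) = D - 2 * wt y := by
  have hsign : ∀ k, (if y k then (-1 : ℂ) else 1) = 1 - 2 * (if y k = true then 1 else 0) := by
    intro k; cases y k <;> norm_num
  simp only [hsign, sum_sub_distrib, sum_const, card_univ, Fintype.card_fin, ← mul_sum,
    sum_boole, wt, nsmul_eq_mul, mul_one]

theorem dualAdjMat_mul_Pmat (D : ℕ) : dualAdjMat D * Pmat D = Pmat D * adjMat D := by
  ext y z
  rw [dualAdjMat, diagonal_mul, mul_apply, sum_mul_adjMat]
  simp only [Pmat_flipCoord, ← sum_mul, sum_sign_eq]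

theorem Emat_eq_aeval_basis (D i : ℕ) :
    Emat D i = Polynomial.aeval (adjMat D) (Lagrange.basis (range (D + 1)) (theta D) i) := rfl

theorem theta_injective (D : ℕ) : Function.Injective (theta D) := by
  intro a b h
  exact_mod_cast (mul_right_injective₀ two_ne_zero (sub_right_injective h) : (a : ℂ) = b)

theorem wt_le {D : ℕ} (y : Vtx D) : wt y ≤ D :=
  (card_filter_le _ _).trans_eq (card_fin D)

theorem EstarMat_eq_aeval_basis (D i : ℕ) :
    EstarMat D i
      = Polynomial.aeval (dualAdjMat D) (Lagrange.basis (range (D + 1)) (theta D) i) := by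
  rw [dualAdjMat, Polynomial.aeval_diagonal, EstarMat]
  congr 1
  ext y
  have hy : wt y ∈ range (D + 1) := mem_range.mpr (Nat.lt_succ_of_le (wt_le y))
  change _ = (Lagrange.basis _ _ i).eval (theta D (wt y))
  split_ifs with h
  · subst h; exact (Lagrange.eval_basis_self (theta_injective D).injOn hy).symm
  · exact (Lagrange.eval_basis_of_ne (Ne.symm h) hy).symm

theorem idempotents_cyclic_conjugation_general (D : ℕ) (i : ℕ) :
    EstarMat D i * Pmat D = Pmat D * Emat D i ∧
    EepsMat D i * Pmat D = Pmat D * EstarMat D i ∧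
    Emat D i * Pmat D = Pmat D * EepsMat D i := by
  have hstar : EstarMat D i * Pmat D = Pmat D * Emat D i := by
    rw [EstarMat_eq_aeval_basis, Emat_eq_aeval_basis]
    exact (SemiconjBy.aeval (dualAdjMat_mul_Pmat D).symm _).symm
  have hcube : Commute (Pmat D ^ 3) (Emat D i) := by
    rw [Pmat_pow_three]
    exact (Commute.one_left _).smul_left _
  refine ⟨hstar, inv_mul_mul_mul_self_eq_of_commute_pow_three (isUnit_det_Pmat D) hcube hstar, ?_⟩
  rw [EepsMat, mul_assoc _ (Emat D i), mul_nonsing_inv_cancel_left _ _ (isUnit_det_Pmat D)]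

/-- For `0 ≤ i ≤ D` the idempotents are cyclically conjugated by `P`:
`E*_i P = P E_i`, `Eᵉ_i P = P E*_i`, `E_i P = P Eᵉ_i`. -/
theorem idempotents_cyclic_conjugation (D : ℕ) (hD : 0 < D) (i : ℕ) (hi : i ≤ D) :
    EstarMat D i * Pmat D = Pmat D * Emat D i ∧
    EepsMat D i * Pmat D = Pmat D * EstarMat D i ∧
    Emat D i * Pmat D = Pmat D * EepsMat D i :=
  idempotents_cyclic_conjugation_general D i
end
end
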